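/- arXiv:2003.06820 — 4 statements merged into one kernel-verified Lean document; each statement's English description precedes it below -/
import Mathlib

section
/- Let n ≥ 1. A continuous function f : ℝ^n → ℝ^n is intra order-preserving if and only if there exists a continuous function w : ℝ^n → ℝ^n such that: (i) for every x ∈ ℝ^n, every permutation σ sorting x, and every i ∈ {1,…,n}, f(x)_{σ(i)} = Σ_{j=i}^{n} w_j(x); (ii) for every x ∈ ℝ^n and every i < n, w_i(x) = 0 if y_i = y_{i+1} and w_i(x) > 0 if y_i > y_{i+1}, where y is the sorted version of x (w_n(x) is unconstrained). -/
/-- `f` is intra order-preserving: `x` and `f x` share the same ranking, i.e., all strict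
inequalities (and hence all ties) among coordinates are preserved. -/
def IntraOrderPreserving (n : ℕ) (f : (Fin n → ℝ) → (Fin n → ℝ)) : Prop :=
  ∀ (x : Fin n → ℝ) (i j : Fin n), x i > x j ↔ f x i > f x j

/-- `σ` is a permutation sorting `x` in nonincreasing order. -/
def SortsPerm (n : ℕ) (σ : Equiv.Perm (Fin n)) (x : Fin n → ℝ) : Prop :=
  Antitone (x ∘ σ)

/-- The sorted (nonincreasing) version of `x`. -/
noncomputable def sortedDesc (n : ℕ) (x : Fin n → ℝ) : Fin n → ℝ :=
  fun i => x (Tuple.sort (fun j => -x j) i)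

/-!
Sorting is continuous: on each of the finitely many closed cones `{x | σ sorts x}` it is
the linear map `x ↦ x ∘ σ`. If `f` is intra order-preserving, every `σ` sorting `x` also sorts
`f x`, so one may take for `w x` the gaps between consecutive entries of the sorted `f x`; they
telescope back to `f x ∘ σ`, and vanish or are positive exactly where the sorted `x` has a tie
or a strict drop. Conversely, (i) says that `w x` is the vector of gaps of `f x ∘ σ`, and (ii)
that these gaps vanish exactly where those of the sorted `x` do and are positive elsewhere. As
`y a - y b` is the sum of the gaps of `y` between `a` and `b`, two nonincreasing vectors with
this property have the same ranking.
-/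

open Finset

variable {n : ℕ}

section Sorting

theorem sortsPerm_sort (x : Fin n → ℝ) : SortsPerm n (Tuple.sort fun j => -x j) x :=
  fun _ _ hab => neg_le_neg_iff.1 (Tuple.monotone_sort (fun j => -x j) hab)

theorem SortsPerm.apply_eq_sortedDesc {σ : Equiv.Perm (Fin n)} {x : Fin n → ℝ}
    (hσ : SortsPerm n σ x) (i : Fin n) : x (σ i) = sortedDesc n x i := by
  have hmono : Monotone ((fun j => -x j) ∘ σ) := fun _ _ hab => neg_le_neg (hσ hab)
  exact neg_injective (congrFun (Tuple.comp_sort_eq_comp_iff_monotone.2 hmono) i)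

theorem antitone_sortedDesc (x : Fin n → ℝ) : Antitone (sortedDesc n x) :=
  sortsPerm_sort x

theorem isClosed_setOf_sortsPerm (σ : Equiv.Perm (Fin n)) :
    IsClosed {x : Fin n → ℝ | SortsPerm n σ x} := by
  simp only [SortsPerm, Antitone, Function.comp_apply, Set.ofPred_forall]
  exact isClosed_iInter fun _ => isClosed_iInter fun _ => isClosed_iInter fun _ =>
    isClosed_le (continuous_apply _) (continuous_apply _)

theorem continuous_sortedDesc : Continuous (sortedDesc n) :=
  LocallyFinite.continuous (f := fun σ => {x | SortsPerm n σ x}) (locallyFinite_of_finite _)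
    (Set.eq_univ_of_forall fun x => Set.mem_iUnion.2 ⟨_, sortsPerm_sort x⟩)
    isClosed_setOf_sortsPerm
    fun σ => (continuous_pi fun i => continuous_apply (σ i)).continuousOn.congr
      fun _ hx => funext fun i => (hx.apply_eq_sortedDesc i).symm

end Sorting

namespace IntraOrderPreserving

variable {f : (Fin n → ℝ) → (Fin n → ℝ)}

theorem sortsPerm (hf : IntraOrderPreserving n f) {σ : Equiv.Perm (Fin n)} {x : Fin n → ℝ}
    (hσ : SortsPerm n σ x) : SortsPerm n σ (f x) :=
  fun _ _ hab => not_lt.1 fun hlt => not_lt.2 (hσ hab) ((hf x _ _).2 hlt)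

theorem apply_eq_apply (hf : IntraOrderPreserving n f) {x : Fin n → ℝ} {i j : Fin n}
    (h : x i = x j) : f x i = f x j :=
  le_antisymm (not_lt.1 fun hlt => ((hf x i j).2 hlt).ne h.symm)
    (not_lt.1 fun hlt => ((hf x j i).2 hlt).ne h)

end IntraOrderPreserving

section Gaps

variable {M : Type*}

def extendByZero [Zero M] (v : Fin n → M) (k : ℕ) : M :=
  if h : k < n then v ⟨k, h⟩ else 0

theorem extendByZero_of_lt [Zero M] (v : Fin n → M) {k : ℕ} (hk : k < n) :
    extendByZero v k = v ⟨k, hk⟩ :=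
  dif_pos hk

@[simp]
theorem extendByZero_val [Zero M] (v : Fin n → M) (i : Fin n) : extendByZero v i = v i :=
  extendByZero_of_lt v i.isLt

theorem extendByZero_self [Zero M] (v : Fin n → M) : extendByZero v n = 0 :=
  dif_neg (lt_irrefl n)

theorem continuous_extendByZero_apply [Zero M] [TopologicalSpace M] (k : ℕ) :
    Continuous fun v : Fin n → M => extendByZero v k := by
  by_cases hk : k < n
  · simpa only [extendByZero_of_lt _ hk] using continuous_apply _
  · simpa only [extendByZero, hk, dite_false] using continuous_const

theorem Finset.sum_Ico_sub' [AddCommGroup M] (z : ℕ → M) {a b : ℕ} (hab : a ≤ b) :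
    ∑ k ∈ Ico a b, (z k - z (k + 1)) = z a - z b := by
  rw [← neg_sub (z b), ← sum_Ico_sub z hab, ← sum_neg_distrib]
  simp only [neg_sub]

theorem Fin.sum_Ici_eq_sum_Ico_extendByZero [AddCommMonoid M] (v : Fin n → M) (i : Fin n) :
    ∑ j ∈ Ici i, v j = ∑ k ∈ Ico (i : ℕ) n, extendByZero v k := by
  rw [← Fin.map_valEmbedding_Ici, sum_map]
  simp

/-- The last gap is the last entry itself, so that `y i = ∑ j ≥ i, gaps y j`. -/
def gaps [AddGroup M] (y : Fin n → M) (i : Fin n) : M :=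
  extendByZero y i - extendByZero y (i + 1)

theorem gaps_of_lt [AddGroup M] (y : Fin n → M) {k : Fin n} (hk : (k : ℕ) + 1 < n) :
    gaps y k = y k - y ⟨k + 1, hk⟩ := by
  rw [gaps, extendByZero_of_lt _ hk, extendByZero_val]

theorem extendByZero_gaps [AddGroup M] (y : Fin n → M) {k : ℕ} (hk : k < n) :
    extendByZero (gaps y) k = extendByZero y k - extendByZero y (k + 1) := by
  rw [extendByZero_of_lt _ hk, gaps]

theorem sum_Ici_gaps [AddCommGroup M] (y : Fin n → M) (i : Fin n) :
    ∑ j ∈ Ici i, gaps y j = y i := by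
  rw [Fin.sum_Ici_eq_sum_Ico_extendByZero,
    sum_congr rfl fun k hk => extendByZero_gaps y (mem_Ico.1 hk).2,
    sum_Ico_sub' _ i.isLt.le, extendByZero_self, extendByZero_val, sub_zero]

theorem extendByZero_sum_Ici [AddCommMonoid M] (w : Fin n → M) {k : ℕ} (hk : k ≤ n) :
    extendByZero (fun i => ∑ j ∈ Ici i, w j) k = ∑ j ∈ Ico k n, extendByZero w j := by
  rcases hk.lt_or_eq with hk | rfl
  · rw [extendByZero_of_lt _ hk, Fin.sum_Ici_eq_sum_Ico_extendByZero]
  · rw [extendByZero_self, Ico_self, sum_empty]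

theorem gaps_sum_Ici [AddCommGroup M] (w : Fin n → M) :
    gaps (fun i => ∑ j ∈ Ici i, w j) = w := by
  funext i
  rw [gaps, extendByZero_sum_Ici _ i.isLt.le, extendByZero_sum_Ici _ i.isLt,
    sum_eq_sum_Ico_succ_bot i.isLt, add_sub_cancel_right, extendByZero_val]

theorem continuous_gaps [AddGroup M] [TopologicalSpace M] [IsTopologicalAddGroup M] :
    Continuous (gaps : (Fin n → M) → Fin n → M) :=
  continuous_pi fun _ =>
    (continuous_extendByZero_apply _).sub (continuous_extendByZero_apply _)

theorem sub_eq_sum_Ico_gaps [AddCommGroup M] (y : Fin n → M) {c d : Fin n} (hcd : c ≤ d) :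
    y c - y d = ∑ j ∈ Ico c d, gaps y j := by
  have hunion : Ico c d ∪ Ici d = Ici c :=
    coe_injective (by push_cast; exact Set.Ico_union_Ici_eq_Ici hcd)
  have hdisj : Disjoint (Ico c d) (Ici d) :=
    disjoint_left.2 fun j hj hj' => (mem_Ico.1 hj).2.not_ge (mem_Ici.1 hj')
  rw [← sum_Ici_gaps y c, ← sum_Ici_gaps y d, ← hunion, sum_union hdisj, add_sub_cancel_right]

end Gaps

section Ranking

variable {α : Type*} [AddCommGroup α] [LinearOrder α] [IsOrderedAddMonoid α]

theorem Antitone.gaps_nonneg {y : Fin n → α} (hy : Antitone y) {k : Fin n}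
    (hk : (k : ℕ) + 1 < n) : 0 ≤ gaps y k := by
  rw [gaps_of_lt _ hk, sub_nonneg]
  exact hy (Fin.le_def.2 (Nat.le_succ k))

theorem lt_iff_lt_of_gaps {y z : Fin n → α} (hy : Antitone y)
    (hz : ∀ k : Fin n, (k : ℕ) + 1 < n →
      (gaps y k = 0 → gaps z k = 0) ∧ (0 < gaps y k → 0 < gaps z k))
    (a b : Fin n) : y a < y b ↔ z a < z b := by
  have hsucc {c d : Fin n} (j : Fin n) (hj : j ∈ Ico c d) : (j : ℕ) + 1 < n := by
    have := Fin.lt_def.1 (mem_Ico.1 hj).2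
    omega
  have hgap (k : Fin n) (hk : (k : ℕ) + 1 < n) :
      0 ≤ gaps z k ∧ (0 < gaps y k ↔ 0 < gaps z k) := by
    rcases (hy.gaps_nonneg hk).eq_or_lt with h0 | hpos
    · rw [← h0, (hz k hk).1 h0.symm]
      exact ⟨le_rfl, Iff.rfl⟩
    · exact ⟨((hz k hk).2 hpos).le, iff_of_true hpos ((hz k hk).2 hpos)⟩
  rcases le_total a b with hab | hba
  · refine iff_of_false (not_lt.2 ?_) (not_lt.2 ?_) <;>
      rw [← sub_nonneg, sub_eq_sum_Ico_gaps _ hab]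
    exacts [sum_nonneg fun j hj => hy.gaps_nonneg (hsucc j hj),
      sum_nonneg fun j hj => (hgap j (hsucc j hj)).1]
  · rw [← sub_pos, ← sub_pos (a := z b), sub_eq_sum_Ico_gaps _ hba, sub_eq_sum_Ico_gaps _ hba,
      sum_pos_iff_of_nonneg fun j hj => hy.gaps_nonneg (hsucc j hj),
      sum_pos_iff_of_nonneg fun j hj => (hgap j (hsucc j hj)).1]
    exact exists_congr fun j => and_congr_right fun hj => (hgap j (hsucc j hj)).2

end Ranking

theorem stmt_0_general (n : ℕ) (f : (Fin n → ℝ) → (Fin n → ℝ))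
    (hf : Continuous f) :
    IntraOrderPreserving n f ↔
      ∃ w : (Fin n → ℝ) → (Fin n → ℝ), Continuous w ∧
        (∀ (x : Fin n → ℝ) (σ : Equiv.Perm (Fin n)), SortsPerm n σ x →
          ∀ i : Fin n, f x (σ i) = ∑ j ∈ Finset.Ici i, w x j) ∧
        (∀ (x : Fin n → ℝ) (i : ℕ) (hi : i + 1 < n),
          (sortedDesc n x ⟨i, Nat.lt_of_succ_lt hi⟩ = sortedDesc n x ⟨i + 1, hi⟩ →
            w x ⟨i, Nat.lt_of_succ_lt hi⟩ = 0) ∧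
          (sortedDesc n x ⟨i, Nat.lt_of_succ_lt hi⟩ > sortedDesc n x ⟨i + 1, hi⟩ →
            0 < w x ⟨i, Nat.lt_of_succ_lt hi⟩)) := by
  constructor
  · intro hiop
    refine ⟨fun x => gaps (sortedDesc n (f x)),
      continuous_gaps.comp (continuous_sortedDesc.comp hf), fun x σ hσ i => ?_, fun x i hi => ?_⟩
    · rw [sum_Ici_gaps, (hiop.sortsPerm hσ).apply_eq_sortedDesc]
    · have hx := (sortsPerm_sort x).apply_eq_sortedDesc
      have hfx := (hiop.sortsPerm (sortsPerm_sort x)).apply_eq_sortedDesc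
      simp only [gaps_of_lt (k := ⟨i, _⟩) _ hi, ← hx, ← hfx, sub_eq_zero, sub_pos]
      exact ⟨hiop.apply_eq_apply, (hiop x _ _).1⟩
  · rintro ⟨w, -, hsum, hsign⟩ x i j
    set σ := Tuple.sort fun k => -x k
    have hσ : SortsPerm n σ x := sortsPerm_sort x
    have hgaps : gaps (fun k => f x (σ k)) = w x := by
      rw [funext (hsum x σ hσ), gaps_sum_Ici]
    have key := lt_iff_lt_of_gaps (z := fun k => f x (σ k)) (antitone_sortedDesc x)
      (fun ⟨k, _⟩ hk => by
        rw [hgaps, gaps_of_lt _ hk, sub_eq_zero, sub_pos]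
        exact hsign x k hk) (σ.symm j) (σ.symm i)
    simpa only [← hσ.apply_eq_sortedDesc, Equiv.apply_symm_apply] using key

theorem stmt_0 (n : ℕ) (hn : 1 ≤ n) (f : (Fin n → ℝ) → (Fin n → ℝ))
    (hf : Continuous f) :
    IntraOrderPreserving n f ↔
      ∃ w : (Fin n → ℝ) → (Fin n → ℝ), Continuous w ∧
        (∀ (x : Fin n → ℝ) (σ : Equiv.Perm (Fin n)), SortsPerm n σ x →
          ∀ i : Fin n, f x (σ i) = ∑ j ∈ Finset.Ici i, w x j) ∧
        (∀ (x : Fin n → ℝ) (i : ℕ) (hi : i + 1 < n),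
          (sortedDesc n x ⟨i, Nat.lt_of_succ_lt hi⟩ = sortedDesc n x ⟨i + 1, hi⟩ →
            w x ⟨i, Nat.lt_of_succ_lt hi⟩ = 0) ∧
          (sortedDesc n x ⟨i, Nat.lt_of_succ_lt hi⟩ > sortedDesc n x ⟨i + 1, hi⟩ →
            0 < w x ⟨i, Nat.lt_of_succ_lt hi⟩)) :=
  stmt_0_general n f hf
end

section
/- Let n ≥ 1 and let v : ℝ^n → ℝ^n be a continuous function such that for every x ∈ ℝ^n the vector v(x) is nonincreasing (v(x)_1 ≥ v(x)_2 ≥ … ≥ v(x)_n) and, for every i < n, v(x)_i = v(x)_{i+1} if and only if y_i = y_{i+1}, where y is the sorted version of x. Define f : ℝ^n → ℝ^n by f(x)_{σ(i)} = v(x)_i for any permutation σ sorting x (this is well defined). Then f is continuous on ℝ^n. -/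
theorem stmt_5 (n : ℕ) (hn : 1 ≤ n) (v : (Fin n → ℝ) → (Fin n → ℝ))
    (hv : Continuous v)
    (hmono : ∀ x : Fin n → ℝ, Antitone (v x))
    (heq : ∀ (x : Fin n → ℝ) (i : ℕ) (hi : i + 1 < n),
      v x ⟨i, Nat.lt_of_succ_lt hi⟩ = v x ⟨i + 1, hi⟩ ↔
        sortedDesc n x ⟨i, Nat.lt_of_succ_lt hi⟩ = sortedDesc n x ⟨i + 1, hi⟩)
    (f : (Fin n → ℝ) → (Fin n → ℝ))
    (hfdef : ∀ (x : Fin n → ℝ) (σ : Equiv.Perm (Fin n)), SortsPerm n σ x →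
      ∀ i : Fin n, f x (σ i) = v x i) :
    Continuous f := by
  rw [continuous_iff_continuousAt]
  intro x₀
  rw [Metric.continuousAt_iff]
  intro ε hε
  -- gap between distinct coordinates of x₀
  have hgap : ∃ δ₁ > (0:ℝ), ∀ i k : Fin n, x₀ i < x₀ k → x₀ i + 2 * δ₁ ≤ x₀ k := by
    set s : Finset ℝ :=
      ((Finset.univ : Finset (Fin n × Fin n)).filter (fun p => x₀ p.1 < x₀ p.2)).image
        (fun p => x₀ p.2 - x₀ p.1) with hs
    by_cases hne : s.Nonempty
    · refine ⟨s.min' hne / 2, ?_, ?_⟩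
      · have : 0 < s.min' hne := by
          rw [Finset.lt_min'_iff]
          intro b hb
          rw [hs] at hb
          simp only [Finset.mem_image, Finset.mem_filter] at hb
          obtain ⟨p, ⟨_, hp⟩, he⟩ := hb
          linarith
        linarith
      · intro i k h
        have hmem : x₀ k - x₀ i ∈ s := by
          rw [hs]
          simp only [Finset.mem_image, Finset.mem_filter]
          exact ⟨(i, k), ⟨Finset.mem_univ _, h⟩, rfl⟩
        have := s.min'_le _ hmem
        linarith
    · refine ⟨1, one_pos, fun i k h => absurd hne ?_⟩
      simp only [not_not]
      exact ⟨x₀ k - x₀ i, by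
        rw [hs]
        simp only [Finset.mem_image, Finset.mem_filter]
        exact ⟨(i, k), ⟨Finset.mem_univ _, h⟩, rfl⟩⟩
  obtain ⟨δ₁, hδ₁, hgap⟩ := hgap
  -- continuity of v at x₀
  obtain ⟨δ₂, hδ₂, hvclose⟩ := Metric.continuousAt_iff.mp hv.continuousAt ε hε
  refine ⟨min δ₁ δ₂, lt_min hδ₁ hδ₂, ?_⟩
  intro y hy
  set σ : Equiv.Perm (Fin n) := Tuple.sort (fun j => -y j) with hσ
  have hσy : SortsPerm n σ y := by
    intro a b hab
    have := Tuple.monotone_sort (fun j => -y j) hab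
    simp only [Function.comp_apply] at this ⊢
    linarith
  have hcoord : ∀ j, dist (y j) (x₀ j) < δ₁ :=
    fun j => lt_of_le_of_lt (dist_le_pi_dist y x₀ j) (lt_of_lt_of_le hy (min_le_left _ _))
  have hσx : SortsPerm n σ x₀ := by
    intro a b hab
    simp only [Function.comp_apply]
    by_contra h
    push_neg at h
    have hg := hgap _ _ h
    have h1 := hcoord (σ a)
    have h2 := hcoord (σ b)
    rw [Real.dist_eq, abs_lt] at h1 h2
    have hyab : y (σ b) ≤ y (σ a) := hσy hab
    linarith
  have hvlt : dist (v y) (v x₀) < ε :=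
    hvclose (lt_of_lt_of_le hy (min_le_right _ _))
  rw [dist_pi_lt_iff hε]
  intro j
  have e1 : f y j = v y (σ.symm j) := by
    have := hfdef y σ hσy (σ.symm j)
    rwa [Equiv.apply_symm_apply] at this
  have e2 : f x₀ j = v x₀ (σ.symm j) := by
    have := hfdef x₀ σ hσx (σ.symm j)
    rwa [Equiv.apply_symm_apply] at this
  rw [e1, e2]
  exact lt_of_le_of_lt (dist_le_pi_dist (v y) (v x₀) (σ.symm j)) hvlt
end

section
/- Let n ≥ 1. Every diagonal intra order-preserving function f : ℝ^n → ℝ^n is order-invariant. -/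
/-- `f` is diagonal: each output coordinate depends only on the corresponding input
coordinate. -/
def Diagonal (n : ℕ) (f : (Fin n → ℝ) → (Fin n → ℝ)) : Prop :=
  ∃ g : Fin n → ℝ → ℝ, ∀ (x : Fin n → ℝ) (i : Fin n), f x i = g i (x i)

/-- `f` is order-invariant: it commutes with every permutation of the coordinates. -/
def OrderInvariant (n : ℕ) (f : (Fin n → ℝ) → (Fin n → ℝ)) : Prop :=
  ∀ (σ : Equiv.Perm (Fin n)) (x : Fin n → ℝ), f (x ∘ σ) = f x ∘ σ

theorem stmt_11 (n : ℕ) (hn : 1 ≤ n) (f : (Fin n → ℝ) → (Fin n → ℝ))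
    (hdiag : Diagonal n f) (hop : IntraOrderPreserving n f) :
    OrderInvariant n f := by
  obtain ⟨g, hg⟩ := hdiag
  have key : ∀ (i j : Fin n) (t : ℝ), g i t = g j t := by
    intro i j t
    have h1 := (hop (fun _ => t) i j)
    have h2 := (hop (fun _ => t) j i)
    simp only [hg] at h1 h2
    have := h1.mpr
    have := h2.mpr
    simp at h1 h2
    linarith
  intro σ x
  funext i
  simp only [Function.comp_apply, hg]
  exact key i (σ i) (x (σ i))
end

section
/- Let n = 3, s(a) = a² for a ∈ ℝ, and m : ℝ³ → ℝ³ the constant function m(x) = (1,1,1). Define w : ℝ³ → ℝ³ by w_i(x) = s(y_i − y_{i+1}) · m_i(x) for i ∈ {1,2} and w_3(x) = 1, where y is the sorted version of x, and define f : ℝ³ → ℝ³ by f(x)_{σ(i)} = Σ_{j=i}^{3} w_j(x) for any permutation σ sorting x. Then f is not differentiable at the point x = (2,1,1); in particular, the scalar function α ↦ f₁((2,1,1) + α·e₃) equals s(1) + s(−α) + 1 for α ≤ 0 and s(1−α) + s(α) + 1 for 0 < α ≤ 1, and this function is not differentiable at α = 0. -/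
/-- `w_i(x) = s(y_i - y_{i+1}) * m_i(x)` for `i < n` and `w_n(x) = m_n(x)`,
where `y` is the sorted version of `x`. -/
noncomputable def wFun (n : ℕ) (s : ℝ → ℝ) (m : (Fin n → ℝ) → (Fin n → ℝ)) :
    (Fin n → ℝ) → Fin n → ℝ :=
  fun x i =>
    if h : (i : ℕ) + 1 < n then
      s (sortedDesc n x i - sortedDesc n x ⟨(i : ℕ) + 1, h⟩) * m x i
    else m x i

/-! At `(2, 1, 1)` the last two coordinates tie, so moving along `e₃` swaps which of them is
sorted second: the consecutive gaps of the sorted vector are `(1, -α)` for `α ≤ 0` but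
`(1 - α, α)` for small `α > 0`. With `s a = a²` the one-sided derivatives of `f₁` at `α = 0` are
therefore `0` and `-2`. -/

open Set

lemma sortedDesc_eq_comp {n : ℕ} {x : Fin n → ℝ} {σ : Equiv.Perm (Fin n)}
    (hσ : SortsPerm n σ x) : sortedDesc n x = x ∘ σ := by
  have hmono : Monotone ((fun j => -x j) ∘ σ) := fun i j hij => neg_le_neg (hσ hij)
  have hsort := Tuple.comp_sort_eq_comp_iff_monotone.mpr hmono
  funext i
  simpa [sortedDesc] using (congrFun hsort i).symm

lemma wFun_three_eq_of_sortsPerm {s : ℝ → ℝ} {m : (Fin 3 → ℝ) → Fin 3 → ℝ} {x : Fin 3 → ℝ}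
    {σ : Equiv.Perm (Fin 3)} (hσ : SortsPerm 3 σ x) :
    wFun 3 s m x = ![s (x (σ 0) - x (σ 1)) * m x 0, s (x (σ 1) - x (σ 2)) * m x 1, m x 2] := by
  funext i
  fin_cases i <;> simp [wFun, sortedDesc_eq_comp hσ]

lemma apply_sortsPerm_zero_eq {s : ℝ → ℝ} {m : (Fin 3 → ℝ) → Fin 3 → ℝ}
    {f : (Fin 3 → ℝ) → Fin 3 → ℝ}
    (hf : ∀ (x : Fin 3 → ℝ) (σ : Equiv.Perm (Fin 3)), SortsPerm 3 σ x →
      ∀ i : Fin 3, f x (σ i) = ∑ j ∈ Finset.Ici i, wFun 3 s m x j)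
    {x : Fin 3 → ℝ} {σ : Equiv.Perm (Fin 3)} (hσ : SortsPerm 3 σ x) :
    f x (σ 0) = s (x (σ 0) - x (σ 1)) * m x 0 + s (x (σ 1) - x (σ 2)) * m x 1 + m x 2 := by
  rw [hf x σ hσ 0, wFun_three_eq_of_sortsPerm hσ, show Finset.Ici (0 : Fin 3) = Finset.univ by
    decide, Fin.sum_univ_three]
  simp

lemma sortsPerm_refl_of_nonpos {α : ℝ} (hα : α ≤ 0) : SortsPerm 3 1 ![2, 1, 1 + α] := by
  refine Fin.antitone_iff_succ_le.mpr fun i => ?_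
  fin_cases i <;> simp [hα]

lemma sortsPerm_swap_of_pos_of_le_one {α : ℝ} (h0 : 0 < α) (h1 : α ≤ 1) :
    SortsPerm 3 (Equiv.swap 1 2) ![2, 1, 1 + α] := by
  refine Fin.antitone_iff_succ_le.mpr fun i => ?_
  fin_cases i <;> simp [Equiv.swap_apply_of_ne_of_ne] <;> linarith

lemma not_differentiableAt_of_hasDerivWithinAt_Iic_Ioi {F : Type*} [NormedAddCommGroup F]
    [NormedSpace ℝ F] {g : ℝ → F} {a b : F} {x : ℝ}
    (hl : HasDerivWithinAt g a (Iic x) x) (hr : HasDerivWithinAt g b (Ioi x) x) (hab : a ≠ b) :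
    ¬ DifferentiableAt ℝ g x := fun hg =>
  hab <| ((uniqueDiffWithinAt_Iic x).eq_deriv _ hl hg.hasDerivAt.hasDerivWithinAt).trans
    ((uniqueDiffWithinAt_Ioi x).eq_deriv _ hg.hasDerivAt.hasDerivWithinAt hr)

lemma not_differentiableAt_zero_of_sq_kink {g : ℝ → ℝ}
    (hl : ∀ α : ℝ, α ≤ 0 → g α = 1 ^ 2 + (-α) ^ 2 + 1)
    (hr : ∀ α : ℝ, 0 < α → α ≤ 1 → g α = (1 - α) ^ 2 + α ^ 2 + 1) :
    ¬ DifferentiableAt ℝ g 0 := by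
  refine not_differentiableAt_of_hasDerivWithinAt_Iic_Ioi (a := 0) (b := -2) ?_ ?_ (by norm_num)
  · have hpoly : HasDerivAt (fun α : ℝ => (1 : ℝ) ^ 2 + (-α) ^ 2 + 1) 0 0 := by
      simpa using (((hasDerivAt_id (0 : ℝ)).neg.pow 2).const_add ((1 : ℝ) ^ 2)).add_const (1 : ℝ)
    exact hpoly.hasDerivWithinAt.congr hl (hl 0 le_rfl)
  · have hpoly : HasDerivAt (fun α : ℝ => (1 - α) ^ 2 + α ^ 2 + 1) (-2) 0 := by
      simpa using ((((hasDerivAt_id (0 : ℝ)).const_sub 1).pow 2).add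
        ((hasDerivAt_id (0 : ℝ)).pow 2)).add_const (1 : ℝ)
    refine hpoly.hasDerivWithinAt.congr_of_eventuallyEq ?_ (by simpa using hl 0 le_rfl)
    filter_upwards [Ioo_mem_nhdsGT one_pos] with α hα using hr α hα.1 hα.2.le

lemma differentiableAt_apply_add_smul {E F ι : Type*} [NormedAddCommGroup E] [NormedSpace ℝ E]
    [NormedAddCommGroup F] [NormedSpace ℝ F] [Fintype ι] {f : E → ι → F} {p : E} (hf : DifferentiableAt ℝ f p) (v : E) (i : ι) :
    DifferentiableAt ℝ (fun α : ℝ => f (p + α • v) i) 0 := by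
  have hline : DifferentiableAt ℝ (fun α : ℝ => p + α • v) 0 := by fun_prop
  have hf' : DifferentiableAt ℝ f (p + (0 : ℝ) • v) := by simpa using hf
  exact differentiableAt_pi.mp (hf'.comp 0 hline) i

/-- with `n = 3`, `s a = a ^ 2` and `m ≡ (1,1,1)`, the resulting intra
order-preserving function `f` is not differentiable at `(2,1,1)`; in particular the scalar
function `α ↦ f₁((2,1,1) + α • e₃)` has the stated closed form and is not differentiable
at `0`. -/
theorem stmt_15 (f : (Fin 3 → ℝ) → (Fin 3 → ℝ))
    (hfdef : ∀ (x : Fin 3 → ℝ) (σ : Equiv.Perm (Fin 3)), SortsPerm 3 σ x →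
      ∀ i : Fin 3, f x (σ i) =
        ∑ j ∈ Finset.Ici i, wFun 3 (fun a => a ^ 2) (fun _ _ => 1) x j) :
    (∀ α : ℝ, α ≤ 0 →
      f (![2, 1, 1] + α • ![0, 0, 1]) 0 = (1 : ℝ) ^ 2 + (-α) ^ 2 + 1) ∧
    (∀ α : ℝ, 0 < α → α ≤ 1 →
      f (![2, 1, 1] + α • ![0, 0, 1]) 0 = (1 - α) ^ 2 + α ^ 2 + 1) ∧
    ¬ DifferentiableAt ℝ (fun α : ℝ => f (![2, 1, 1] + α • ![0, 0, 1]) 0) 0 ∧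
    ¬ DifferentiableAt ℝ f ![2, 1, 1] := by
  have hline (α : ℝ) : (![2, 1, 1] + α • ![0, 0, 1] : Fin 3 → ℝ) = ![2, 1, 1 + α] := by
    funext i
    fin_cases i <;> simp [add_comm]
  have hleft (α : ℝ) (hα : α ≤ 0) :
      f (![2, 1, 1] + α • ![0, 0, 1]) 0 = (1 : ℝ) ^ 2 + (-α) ^ 2 + 1 := by
    have h := apply_sortsPerm_zero_eq hfdef (sortsPerm_refl_of_nonpos hα)
    simp only [Equiv.Perm.coe_one, id_eq, Matrix.cons_val_zero, Matrix.cons_val_one,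
      Matrix.cons_val, mul_one] at h
    rw [hline, h]
    ring
  have hright (α : ℝ) (h0 : 0 < α) (h1 : α ≤ 1) :
      f (![2, 1, 1] + α • ![0, 0, 1]) 0 = (1 - α) ^ 2 + α ^ 2 + 1 := by
    have hswap : Equiv.swap (1 : Fin 3) 2 0 = 0 := by decide
    have h := apply_sortsPerm_zero_eq hfdef (sortsPerm_swap_of_pos_of_le_one h0 h1)
    simp only [hswap, Equiv.swap_apply_left, Equiv.swap_apply_right, Matrix.cons_val_zero,
      Matrix.cons_val_one, Matrix.cons_val, mul_one] at h
    rw [hline, h]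
    ring
  have hnot := not_differentiableAt_zero_of_sq_kink hleft hright
  exact ⟨hleft, hright, hnot, fun hf => hnot (differentiableAt_apply_add_smul hf _ 0)⟩
end
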